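/- arXiv:1412.0881 — 2 statements merged into one kernel-verified Lean document; each statement's English description precedes it below -/
import Mathlib

section
/- Every automorphism of the graph G on ℚ⁺ ∪ ℚ⁻ with edges q⁺r⁻ for q < r is either of the form γ↑ or of the form γ↓ for some order automorphism γ of ℚ. In particular, the automorphism group of G is isomorphic to the group generated by Aut(ℚ, <) acting diagonally together with the order-reversing swap. -/
open Sum

/-- The graph on two copies of ℚ with `inl q` adjacent to `inr r` iff `q < r`. -/
def G : SimpleGraph (ℚ ⊕ ℚ) where
  Adj u v := match u, v with
    | .inl q, .inr r => q < r
    | .inr r, .inl q => q < r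
    | _, _ => False
  symm := ⟨by intro u v h; cases u <;> cases v <;> simp_all⟩
  loopless := ⟨by intro u h; cases u <;> simp_all⟩

/-!
Two vertices lie on the same side iff they have a common neighbour, so an automorphism either
preserves both sides or exchanges them; composing with `inl q ↦ inr (-q)`, `inr q ↦ inl (-q)`
reduces the second case to the first. A side-preserving automorphism acts by bijections `f, g`
of `ℚ` with `q < r ↔ f q < g r`. Taking `r = q` gives `g ≤ f`, so `g` is strictly monotone, and
density together with surjectivity of `g` forces `f = g`.
-/

section

variable {α β : Type*} [LinearOrder α] [LinearOrder β] {f g : α → β}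

theorem strictMono_of_lt_iff_lt (h : ∀ q r, q < r ↔ f q < g r) : StrictMono g :=
  fun a b hab => (not_lt.1 fun hlt => lt_irrefl a ((h a a).2 hlt)).trans_lt ((h a b).1 hab)

theorem eq_of_lt_iff_lt [DenselyOrdered β] (hg : Function.Surjective g)
    (h : ∀ q r, q < r ↔ f q < g r) : f = g := by
  funext q
  refine le_antisymm (not_lt.1 fun hlt => ?_) (not_lt.1 fun hlt => lt_irrefl q ((h q q).2 hlt))
  obtain ⟨s, hgs, hsf⟩ := exists_between hlt
  obtain ⟨r, rfl⟩ := hg s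
  exact lt_asymm hsf ((h q r).1 ((strictMono_of_lt_iff_lt h).lt_iff_lt.1 hgs))

end

namespace G

@[simp] theorem adj_inl_inr {q r : ℚ} : G.Adj (inl q) (inr r) ↔ q < r := Iff.rfl

@[simp] theorem adj_inr_inl {q r : ℚ} : G.Adj (inr r) (inl q) ↔ q < r := Iff.rfl

@[simp] theorem not_adj_inl_inl {q r : ℚ} : ¬G.Adj (inl q) (inl r) := id

@[simp] theorem not_adj_inr_inr {q r : ℚ} : ¬G.Adj (inr q) (inr r) := id

theorem isLeft_eq_isLeft_iff_exists_adj {u v : ℚ ⊕ ℚ} :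
    u.isLeft = v.isLeft ↔ ∃ w, G.Adj u w ∧ G.Adj v w := by
  refine ⟨fun h => ?_, fun ⟨w, hu, hv⟩ => ?_⟩
  · rcases u with q | q <;> rcases v with r | r
    · exact ⟨inr (max q r + 1), adj_inl_inr.2 (by linarith [le_max_left q r]),
        adj_inl_inr.2 (by linarith [le_max_right q r])⟩
    · cases h
    · cases h
    · exact ⟨inl (min q r - 1), adj_inr_inl.2 (by linarith [min_le_left q r]),
        adj_inr_inl.2 (by linarith [min_le_right q r])⟩
  · rcases u with q | q <;> rcases v with r | r <;> rcases w with s | s <;> simp_all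

theorem isLeft_map_eq_isLeft_map_iff (φ : G ≃g G) (u v : ℚ ⊕ ℚ) :
    (φ u).isLeft = (φ v).isLeft ↔ u.isLeft = v.isLeft := by
  rw [isLeft_eq_isLeft_iff_exists_adj, isLeft_eq_isLeft_iff_exists_adj, φ.surjective.exists]
  simp only [φ.map_adj_iff]

theorem isLeft_map_eq_or (φ : G ≃g G) :
    (∀ u, (φ u).isLeft = u.isLeft) ∨ ∀ u, (φ u).isRight = u.isLeft := by
  have h := fun u => isLeft_map_eq_isLeft_map_iff φ u (inl 0)
  cases h0 : (φ (inl 0)).isLeft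
  · exact Or.inr fun u => by simpa [h0] using h u
  · exact Or.inl fun u => by simpa [h0] using h u

def negSwap : G ≃g G where
  toEquiv := (Equiv.sumComm ℚ ℚ).trans (Equiv.sumCongr (Equiv.neg ℚ) (Equiv.neg ℚ))
  map_rel_iff' := by
    rintro (q | q) (r | r) <;> simp

@[simp] theorem negSwap_inl (q : ℚ) : negSwap (inl q) = inr (-q) := rfl

@[simp] theorem negSwap_inr (q : ℚ) : negSwap (inr q) = inl (-q) := rfl

theorem isLeft_negSwap (u : ℚ ⊕ ℚ) : (negSwap u).isLeft = u.isRight := by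
  rcases u with q | q <;> rfl

@[simp] theorem negSwap_negSwap (u : ℚ ⊕ ℚ) : negSwap (negSwap u) = u := by
  rcases u with q | q <;> simp

theorem exists_orderIso_of_isLeft_map_eq (φ : G ≃g G) (hφ : ∀ u, (φ u).isLeft = u.isLeft) :
    ∃ γ : ℚ ≃o ℚ, ∀ q : ℚ, φ (inl q) = inl (γ q) ∧ φ (inr q) = inr (γ q) := by
  choose f hf using fun q => isLeft_iff.1 (hφ (inl q))
  choose g hg using fun q => isRight_iff.1 (isLeft_eq_false.1 (hφ (inr q)))
  have hfg : ∀ q r, q < r ↔ f q < g r := fun q r => by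
    rw [← adj_inl_inr, ← φ.map_adj_iff, hf, hg, adj_inl_inr]
  have hg_surj : Function.Surjective g := fun s => by
    obtain ⟨u, hu⟩ := φ.surjective (inr s)
    obtain ⟨r, rfl⟩ := isRight_iff.1 (isLeft_eq_false.1 (hu ▸ hφ u).symm)
    exact ⟨r, inr_injective ((hg r).symm.trans hu)⟩
  obtain rfl := eq_of_lt_iff_lt hg_surj hfg
  exact ⟨(strictMono_of_lt_iff_lt hfg).orderIsoOfSurjective f hg_surj, fun q => ⟨hf q, hg q⟩⟩

end G

theorem G_aut_classification (φ : G ≃g G) :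
    (∃ γ : ℚ ≃o ℚ, ∀ q : ℚ, φ (inl q) = inl (γ q) ∧ φ (inr q) = inr (γ q)) ∨
    (∃ γ : ℚ ≃o ℚ, ∀ q : ℚ, φ (inl q) = inr (-(γ q)) ∧ φ (inr q) = inl (-(γ q))) := by
  rcases G.isLeft_map_eq_or φ with hφ | hφ
  · exact Or.inl (G.exists_orderIso_of_isLeft_map_eq φ hφ)
  · obtain ⟨γ, hγ⟩ := G.exists_orderIso_of_isLeft_map_eq (φ.trans G.negSwap)
      fun u => by rw [RelIso.trans_apply, G.isLeft_negSwap, hφ]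
    exact Or.inr ⟨γ, fun q => ⟨by simpa using congrArg G.negSwap (hγ q).1,
      by simpa using congrArg G.negSwap (hγ q).2⟩⟩
end

section
/- The graph G on ℚ⁺ ∪ ℚ⁻ with edges q⁺r⁻ for q < r has infinite motion: every non-identity automorphism of G moves infinitely many vertices. -/
open Sum

/-!
If `φ` moved only finitely many vertices, then any vertex `u` with `φ u ≠ u` would be separated
from `φ u` by some fixed vertex `w`, adjacent to exactly one of them, since in `G` any two
vertices have infinitely many such separators (a whole rational interval). But `φ` maps the pair
`u, w` to `φ u, w`, so it cannot change whether `w` is adjacent.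
-/

open Set
open scoped symmDiff

theorem SimpleGraph.Iso.infinite_setOf_apply_ne {V : Type*} {H : SimpleGraph V}
    (hH : Pairwise fun u v => (H.neighborSet u ∆ H.neighborSet v).Infinite) {φ : H ≃g H}
    (hφ : φ ≠ Iso.refl) : {v | φ v ≠ v}.Infinite := by
  intro hfin
  obtain ⟨u, hu⟩ : ∃ u, φ u ≠ u := by
    by_contra! h
    exact hφ (RelIso.ext h)
  obtain ⟨w, hw, hw_fixed⟩ := (hH hu).exists_notMem_finite hfin
  have hφw : φ w = w := not_not.mp hw_fixed
  have hadj := φ.map_adj_iff (v := u) (w := w)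
  rw [hφw] at hadj
  rw [mem_symmDiff, SimpleGraph.mem_neighborSet, SimpleGraph.mem_neighborSet, hadj] at hw
  tauto

lemma G_neighborSet_inl (q : ℚ) : G.neighborSet (inl q) = inr '' Ioi q := by
  ext (r | r) <;> simp [G]

lemma G_neighborSet_inr (r : ℚ) : G.neighborSet (inr r) = inl '' Iio r := by
  ext (q | q) <;> simp [G]

lemma Set.infinite_Ioi_symmDiff_Ioi {α : Type*} [LinearOrder α] [DenselyOrdered α]
    {q r : α} (h : q ≠ r) : (Ioi q ∆ Ioi r).Infinite := by
  wlog hlt : q < r generalizing q r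
  · rw [symmDiff_comm]
    exact this h.symm (h.lt_or_gt.resolve_left hlt)
  exact (Ioo_infinite hlt).mono fun s hs => Or.inl ⟨hs.1, not_lt.mpr hs.2.le⟩

lemma Set.infinite_Iio_symmDiff_Iio {α : Type*} [LinearOrder α] [DenselyOrdered α]
    {q r : α} (h : q ≠ r) : (Iio q ∆ Iio r).Infinite := by
  wlog hlt : q < r generalizing q r
  · rw [symmDiff_comm]
    exact this h.symm (h.lt_or_gt.resolve_left hlt)
  exact (Ioo_infinite hlt).mono fun s hs => Or.inr ⟨hs.2, not_lt.mpr hs.1.le⟩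

lemma G_infinite_neighborSet_symmDiff :
    Pairwise fun u v => (G.neighborSet u ∆ G.neighborSet v).Infinite := by
  rintro (q | q) (r | r) h
  · rw [G_neighborSet_inl, G_neighborSet_inl, ← image_symmDiff inr_injective]
    exact (infinite_Ioi_symmDiff_Ioi (h <| congrArg inl ·)).image inr_injective.injOn
  · rw [G_neighborSet_inl, G_neighborSet_inr]
    refine ((Ioi_infinite q).image inr_injective.injOn).mono ?_
    rintro _ ⟨s, hs, rfl⟩
    exact Or.inl ⟨mem_image_of_mem inr hs, by simp⟩
  · rw [G_neighborSet_inr, G_neighborSet_inl]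
    refine ((Ioi_infinite r).image inr_injective.injOn).mono ?_
    rintro _ ⟨s, hs, rfl⟩
    exact Or.inr ⟨mem_image_of_mem inr hs, by simp⟩
  · rw [G_neighborSet_inr, G_neighborSet_inr, ← image_symmDiff inl_injective]
    exact (infinite_Iio_symmDiff_Iio (h <| congrArg inr ·)).image inl_injective.injOn

theorem G_infinite_motion (φ : G ≃g G) (hφ : φ ≠ (SimpleGraph.Iso.refl : G ≃g G)) :
    {v : ℚ ⊕ ℚ | φ v ≠ v}.Infinite :=
  SimpleGraph.Iso.infinite_setOf_apply_ne G_infinite_neighborSet_symmDiff hφ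
end
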